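/- arXiv:2403.15999 — 2 statements merged into one kernel-verified Lean document; each statement's English description precedes it below -/
import Mathlib

section
/- Let U ∈ ℝ^{d₁×r}, V ∈ ℝ^{d₂×r} have orthonormal columns, let M ∈ ℝ^{d₁×d₂} satisfy M = UUᵀMVVᵀ, and let Ũ ∈ ℝ^{d₁×r}, Ṽ ∈ ℝ^{d₂×r} also have orthonormal columns. Then for any L̂ ∈ ℝ^{d₁×d₂} and E ∈ ℝ^{r×r}, it holds that ‖Ũ(ŨᵀL̂Ṽ + E)Ṽᵀ − M‖ ≤ 2‖L̂ − M‖ + ‖M‖·(‖ṼṼᵀ − VVᵀ‖ + ‖ŨŨᵀ − UUᵀ‖) + ‖E‖, where ‖·‖ is the spectral norm. -/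
open Matrix

/-- Spectral (operator) norm of a real matrix. -/
noncomputable def specNorm {m n : Type*} [Fintype m] [Fintype n] [DecidableEq n]
    (M : Matrix m n ℝ) : ℝ :=
  ‖LinearMap.toContinuousLinearMap (Matrix.toEuclideanLin M)‖

/-- Frobenius norm of a real matrix. -/
noncomputable def frobNorm {m n : Type*} [Fintype m] [Fintype n] (M : Matrix m n ℝ) : ℝ :=
  Real.sqrt (∑ i, ∑ j, (M i j) ^ 2)

section Aux

open scoped Matrix.Norms.L2Operator

lemma specNorm_eq_norm {m n : Type*} [Fintype m] [Fintype n] [DecidableEq n]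
    (M : Matrix m n ℝ) : specNorm M = ‖M‖ := rfl

lemma l2_norm_one_le (q : Type*) [Fintype q] [DecidableEq q] :
    ‖(1 : Matrix q q ℝ)‖ ≤ 1 := by
  rw [Matrix.cstar_norm_def, _root_.map_one]
  exact ContinuousLinearMap.norm_id_le

lemma l2_norm_isometry_le_one {p q : Type*} [Fintype p] [DecidableEq p] [Fintype q]
    [DecidableEq q] (A : Matrix p q ℝ) (h : Aᵀ * A = 1) : ‖A‖ ≤ 1 := by
  have hct : Aᴴ = Aᵀ := by ext i j; simp [Matrix.conjTranspose_apply]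
  have h1 : ‖A‖ * ‖A‖ ≤ 1 := by
    rw [← Matrix.l2_opNorm_conjTranspose_mul_self A, hct, h]
    exact l2_norm_one_le q
  nlinarith [norm_nonneg A]

lemma l2_mul3_le {p q s t : Type*} [Fintype p] [Fintype q] [DecidableEq q] [Fintype s]
    [DecidableEq s] [Fintype t] [DecidableEq t]
    (A : Matrix p q ℝ) (B : Matrix q s ℝ) (C : Matrix s t ℝ) :
    ‖A * B * C‖ ≤ ‖A‖ * ‖B‖ * ‖C‖ :=
  calc ‖A * B * C‖ ≤ ‖A * B‖ * ‖C‖ := Matrix.l2_opNorm_mul _ _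
    _ ≤ ‖A‖ * ‖B‖ * ‖C‖ :=
      mul_le_mul_of_nonneg_right (Matrix.l2_opNorm_mul _ _) (norm_nonneg _)

end Aux

/-- Error decomposition for the privatized initialization `M̃₀ = Ũ(ŨᵀL̂Ṽ + E)Ṽᵀ`:
its spectral-norm distance to `M` is bounded by
`2‖L̂ − M‖ + ‖M‖(‖ṼṼᵀ − VVᵀ‖ + ‖ŨŨᵀ − UUᵀ‖) + ‖E‖`. -/
theorem initialization_error_decomposition {d₁ d₂ r : ℕ}
    (U Ut : Matrix (Fin d₁) (Fin r) ℝ) (V Vt : Matrix (Fin d₂) (Fin r) ℝ)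
    (M L : Matrix (Fin d₁) (Fin d₂) ℝ) (E : Matrix (Fin r) (Fin r) ℝ)
    (hU : Uᵀ * U = 1) (hV : Vᵀ * V = 1) (hUt : Utᵀ * Ut = 1) (hVt : Vtᵀ * Vt = 1)
    (hM : M = U * Uᵀ * M * (V * Vᵀ)) :
    specNorm (Ut * (Utᵀ * L * Vt + E) * Vtᵀ - M)
      ≤ 2 * specNorm (L - M)
        + specNorm M * (specNorm (Vt * Vtᵀ - V * Vᵀ) + specNorm (Ut * Utᵀ - U * Uᵀ))
        + specNorm E := by
  open scoped Matrix.Norms.L2Operator in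
  simp only [specNorm_eq_norm]
  have key : Ut * (Utᵀ * L * Vt + E) * Vtᵀ - (U * Uᵀ * M * (V * Vᵀ)) =
      Ut * Utᵀ * (L - M) * (Vt * Vtᵀ) + Ut * Utᵀ * M * (Vt * Vtᵀ - V * Vᵀ)
        + (Ut * Utᵀ - U * Uᵀ) * (M * (V * Vᵀ)) + Ut * E * Vtᵀ := by
    simp only [Matrix.mul_add, Matrix.add_mul, Matrix.mul_sub, Matrix.sub_mul, Matrix.mul_assoc]
    abel
  conv_lhs => rw [hM, key]
  -- norms of the pieces
  have hUt1 : ‖Ut‖ ≤ 1 := l2_norm_isometry_le_one Ut hUt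
  have hVt1 : ‖Vt‖ ≤ 1 := l2_norm_isometry_le_one Vt hVt
  have hU1 : ‖U‖ ≤ 1 := l2_norm_isometry_le_one U hU
  have hV1 : ‖V‖ ≤ 1 := l2_norm_isometry_le_one V hV
  have hctUt : ‖Utᵀ‖ ≤ 1 := by
    have : Utᴴ = Utᵀ := by ext i j; simp [Matrix.conjTranspose_apply]
    rw [← this, Matrix.l2_opNorm_conjTranspose]; exact hUt1
  have hctVt : ‖Vtᵀ‖ ≤ 1 := by
    have : Vtᴴ = Vtᵀ := by ext i j; simp [Matrix.conjTranspose_apply]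
    rw [← this, Matrix.l2_opNorm_conjTranspose]; exact hVt1
  have hctV : ‖Vᵀ‖ ≤ 1 := by
    have : Vᴴ = Vᵀ := by ext i j; simp [Matrix.conjTranspose_apply]
    rw [← this, Matrix.l2_opNorm_conjTranspose]; exact hV1
  have hPUt : ‖Ut * Utᵀ‖ ≤ 1 :=
    (Matrix.l2_opNorm_mul _ _).trans (by nlinarith [norm_nonneg Ut, norm_nonneg Utᵀ])
  have hPVt : ‖Vt * Vtᵀ‖ ≤ 1 :=
    (Matrix.l2_opNorm_mul _ _).trans (by nlinarith [norm_nonneg Vt, norm_nonneg Vtᵀ])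
  have hPV : ‖V * Vᵀ‖ ≤ 1 :=
    (Matrix.l2_opNorm_mul _ _).trans (by nlinarith [norm_nonneg V, norm_nonneg Vᵀ])
  have hT1 : ‖Ut * Utᵀ * (L - M) * (Vt * Vtᵀ)‖ ≤ ‖L - M‖ := by
    calc ‖Ut * Utᵀ * (L - M) * (Vt * Vtᵀ)‖ ≤ ‖Ut * Utᵀ‖ * ‖L - M‖ * ‖Vt * Vtᵀ‖ :=
          l2_mul3_le _ _ _
      _ ≤ 1 * ‖L - M‖ * 1 := by gcongr
      _ = ‖L - M‖ := by ring
  have hT2 : ‖Ut * Utᵀ * M * (Vt * Vtᵀ - V * Vᵀ)‖ ≤ ‖M‖ * ‖Vt * Vtᵀ - V * Vᵀ‖ := by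
    calc ‖Ut * Utᵀ * M * (Vt * Vtᵀ - V * Vᵀ)‖
        ≤ ‖Ut * Utᵀ‖ * ‖M‖ * ‖Vt * Vtᵀ - V * Vᵀ‖ := l2_mul3_le _ _ _
      _ ≤ 1 * ‖M‖ * ‖Vt * Vtᵀ - V * Vᵀ‖ := by gcongr
      _ = ‖M‖ * ‖Vt * Vtᵀ - V * Vᵀ‖ := by ring
  have hT3 : ‖(Ut * Utᵀ - U * Uᵀ) * (M * (V * Vᵀ))‖ ≤ ‖Ut * Utᵀ - U * Uᵀ‖ * ‖M‖ := by
    have h1 : ‖(Ut * Utᵀ - U * Uᵀ) * (M * (V * Vᵀ))‖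
        ≤ ‖Ut * Utᵀ - U * Uᵀ‖ * ‖M * (V * Vᵀ)‖ := Matrix.l2_opNorm_mul _ _
    have h2 : ‖M * (V * Vᵀ)‖ ≤ ‖M‖ * ‖V * Vᵀ‖ := Matrix.l2_opNorm_mul _ _
    calc ‖(Ut * Utᵀ - U * Uᵀ) * (M * (V * Vᵀ))‖
        ≤ ‖Ut * Utᵀ - U * Uᵀ‖ * ‖M * (V * Vᵀ)‖ := h1
      _ ≤ ‖Ut * Utᵀ - U * Uᵀ‖ * (‖M‖ * ‖V * Vᵀ‖) := by gcongr
      _ ≤ ‖Ut * Utᵀ - U * Uᵀ‖ * (‖M‖ * 1) := by gcongr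
      _ = ‖Ut * Utᵀ - U * Uᵀ‖ * ‖M‖ := by ring
  have hT4 : ‖Ut * E * Vtᵀ‖ ≤ ‖E‖ := by
    calc ‖Ut * E * Vtᵀ‖ ≤ ‖Ut‖ * ‖E‖ * ‖Vtᵀ‖ := l2_mul3_le _ _ _
      _ ≤ 1 * ‖E‖ * 1 := by gcongr
      _ = ‖E‖ := by ring
  have tri : ‖Ut * Utᵀ * (L - M) * (Vt * Vtᵀ) + Ut * Utᵀ * M * (Vt * Vtᵀ - V * Vᵀ)
      + (Ut * Utᵀ - U * Uᵀ) * (M * (V * Vᵀ)) + Ut * E * Vtᵀ‖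
      ≤ ‖Ut * Utᵀ * (L - M) * (Vt * Vtᵀ)‖ + ‖Ut * Utᵀ * M * (Vt * Vtᵀ - V * Vᵀ)‖
        + ‖(Ut * Utᵀ - U * Uᵀ) * (M * (V * Vᵀ))‖ + ‖Ut * E * Vtᵀ‖ := by
    refine (norm_add_le _ _).trans ?_
    have := (norm_add_le (Ut * Utᵀ * (L - M) * (Vt * Vtᵀ) + Ut * Utᵀ * M * (Vt * Vtᵀ - V * Vᵀ))
      ((Ut * Utᵀ - U * Uᵀ) * (M * (V * Vᵀ))))
    have h0 := norm_add_le (Ut * Utᵀ * (L - M) * (Vt * Vtᵀ))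
      (Ut * Utᵀ * M * (Vt * Vtᵀ - V * Vᵀ))
    linarith
  have hnn : (0:ℝ) ≤ ‖L - M‖ := norm_nonneg _
  linarith
end

section
/- Let M ∈ ℝ^{d₁×d₂} have rank r with smallest nonzero singular value σ_r, and let U ∈ ℝ^{d₁×r}, V ∈ ℝ^{d₂×r} be its top-r left and right singular vectors. For any matrix B ∈ ℝ^{d₁×d₂}, let P_⊥(B) := (I − UUᵀ)B(I − VVᵀ) denote the projection onto the orthogonal complement of the tangent space at M. Then for any matrix N of rank at most r with singular vectors (U_N, V_N) defining its own tangent projection, one has the bound ‖(I − U_N U_Nᵀ)(N − M)(I − V_N V_Nᵀ)‖_F ≤ ‖N − M‖ · ‖N − M‖_F / σ_r, where ‖·‖ is the spectral norm and ‖·‖_F the Frobenius norm. -/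
open Matrix

/-! Write `P = 1 - U_N U_Nᵀ`, `Q = 1 - V_N V_Nᵀ`, `Δ = N - M` and `G = V Σ⁻¹ Uᵀ`, so that
`M G M = M`. Since `P N = 0 = N Q`, the projected error factors as `P Δ Q = -(P Δ) G (Δ Q)`.
Taking the spectral norm of the left factor and the Frobenius norm of the right one, and using
`‖P‖, ‖Q‖ ≤ 1` and `‖G‖ ≤ 1 / σ_r`, gives `‖P Δ Q‖_F ≤ ‖Δ‖ ‖Δ‖_F / σ_r`. -/

open scoped Matrix.Norms.L2Operator

namespace Matrix

section Algebra

variable {α : Type*} [CommRing α] {m n : Type*} [Fintype m] [Fintype n]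

lemma mul_sub_mul_eq_neg_mul_mul_sub_mul {l k : Type*} {P : Matrix l m α} {Q : Matrix n k α}
    {N M : Matrix m n α} {G : Matrix n m α} (hPN : P * N = 0) (hNQ : N * Q = 0)
    (hG : M * G * M = M) :
    P * (N - M) * Q = -(P * (N - M) * G * ((N - M) * Q)) := by
  have hPΔ : P * (N - M) = -(P * M) := by rw [Matrix.mul_sub, hPN, zero_sub]
  have hΔQ : (N - M) * Q = -(M * Q) := by rw [Matrix.sub_mul, hNQ, zero_sub]
  calc P * (N - M) * Q = -(P * (M * G * M) * Q) := by rw [hG, hPΔ, Matrix.neg_mul]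
    _ = -(P * (N - M) * G * ((N - M) * Q)) := by
        rw [hPΔ, hΔQ]
        simp only [Matrix.neg_mul, Matrix.mul_neg, neg_neg, Matrix.mul_assoc]

lemma svd_mul_pinv_mul_svd {k l : Type*} [Fintype k] [Fintype l] [DecidableEq k] [DecidableEq l]
    {U : Matrix m k α} {V : Matrix n l α} {D : Matrix k l α} {D' : Matrix l k α}
    (hU : Uᵀ * U = 1) (hV : Vᵀ * V = 1) (hD : D * D' * D = D) :
    U * D * Vᵀ * (V * D' * Uᵀ) * (U * D * Vᵀ) = U * D * Vᵀ := by
  calc U * D * Vᵀ * (V * D' * Uᵀ) * (U * D * Vᵀ)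
      = U * (D * (Vᵀ * V) * D' * (Uᵀ * U) * D) * Vᵀ := by simp only [Matrix.mul_assoc]
    _ = U * D * Vᵀ := by rw [hU, hV, Matrix.mul_one, Matrix.mul_one, hD, Matrix.mul_assoc]

lemma diagonal_mul_diagonal_inv_mul_diagonal {K : Type*} [Field K] [DecidableEq m] (σ : m → K) :
    diagonal σ * diagonal σ⁻¹ * diagonal σ = diagonal σ := by
  rw [diagonal_mul_diagonal, diagonal_mul_diagonal]
  exact congrArg diagonal (funext fun i => mul_inv_mul_cancel (σ i))

variable [DecidableEq m] [DecidableEq n] {W : Matrix m n α}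

lemma one_sub_mul_transpose_mul_mul_eq_zero {l : Type*} (hW : Wᵀ * W = 1)
    (S : Matrix n l α) : (1 - W * Wᵀ) * (W * S) = 0 := by
  rw [Matrix.sub_mul, Matrix.one_mul, Matrix.mul_assoc, ← Matrix.mul_assoc Wᵀ, hW,
    Matrix.one_mul, sub_self]

lemma mul_transpose_mul_one_sub_mul_transpose_eq_zero {l : Type*} (hW : Wᵀ * W = 1)
    (S : Matrix l n α) : S * Wᵀ * (1 - W * Wᵀ) = 0 := by
  rw [Matrix.mul_sub, Matrix.mul_one, Matrix.mul_assoc, ← Matrix.mul_assoc Wᵀ, hW,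
    Matrix.one_mul, sub_self]

lemma transpose_mul_one_sub_mul_transpose (hW : Wᵀ * W = 1) :
    (1 - W * Wᵀ)ᵀ * (1 - W * Wᵀ) = 1 - W * Wᵀ := by
  rw [transpose_sub, transpose_one, transpose_mul, transpose_transpose, Matrix.sub_mul,
    Matrix.one_mul, mul_transpose_mul_one_sub_mul_transpose_eq_zero hW, sub_zero]

end Algebra

section L2OpNorm

variable {m n l : Type*} [Fintype m] [Fintype n] [Fintype l]

lemma l2_opNorm_le_one_of_transpose_mul_self_eq [DecidableEq n] {P : Matrix n n ℝ}
    (hP : Pᵀ * P = P) : ‖P‖ ≤ 1 := by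
  have h : ‖P‖ * ‖P‖ = ‖P‖ := by
    rw [← l2_opNorm_conjTranspose_mul_self, conjTranspose_eq_transpose_of_trivial, hP]
  nlinarith [norm_nonneg P]

lemma l2_opNorm_le_one_of_transpose_mul_self_eq_one [DecidableEq n] {W : Matrix m n ℝ}
    (hW : Wᵀ * W = 1) : ‖W‖ ≤ 1 := by
  have h1 : ‖W‖ * ‖W‖ ≤ 1 := by
    rw [← l2_opNorm_conjTranspose_mul_self, conjTranspose_eq_transpose_of_trivial, hW]
    exact l2_opNorm_le_one_of_transpose_mul_self_eq (by simp)
  nlinarith [norm_nonneg W]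

lemma l2_opNorm_one_sub_mul_transpose_le_one [DecidableEq m] [DecidableEq n] {W : Matrix m n ℝ}
    (hW : Wᵀ * W = 1) : ‖1 - W * Wᵀ‖ ≤ 1 :=
  l2_opNorm_le_one_of_transpose_mul_self_eq (transpose_mul_one_sub_mul_transpose hW)

lemma l2_opNorm_pinv_le [DecidableEq m] [DecidableEq l] {U : Matrix m l ℝ} {V : Matrix n l ℝ}
    (hU : Uᵀ * U = 1) (hV : Vᵀ * V = 1) {σ : l → ℝ} {c : ℝ} (hc : 0 < c) (hσ : ∀ i, c ≤ σ i) :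
    ‖V * diagonal σ⁻¹ * Uᵀ‖ ≤ c⁻¹ := by
  have hD : ‖(diagonal σ⁻¹ : Matrix l l ℝ)‖ ≤ c⁻¹ := by
    rw [l2_opNorm_diagonal, pi_norm_le_iff_of_nonneg (by positivity)]
    intro i
    rw [Pi.inv_apply, norm_inv, Real.norm_of_nonneg (hc.le.trans (hσ i))]
    exact inv_anti₀ hc (hσ i)
  have hUt : ‖Uᵀ‖ ≤ 1 := by
    rw [← conjTranspose_eq_transpose_of_trivial, l2_opNorm_conjTranspose]
    exact l2_opNorm_le_one_of_transpose_mul_self_eq_one hU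
  calc ‖V * diagonal σ⁻¹ * Uᵀ‖ ≤ ‖V‖ * ‖(diagonal σ⁻¹ : Matrix l l ℝ)‖ * ‖Uᵀ‖ :=
        (l2_opNorm_mul _ _).trans (by gcongr; exact l2_opNorm_mul _ _)
    _ ≤ 1 * c⁻¹ * 1 := by
        gcongr
        exact l2_opNorm_le_one_of_transpose_mul_self_eq_one hV
    _ = c⁻¹ := by ring

end L2OpNorm

end Matrix

section Norms

variable {m n l : Type*} [Fintype m] [Fintype n] [Fintype l]

lemma specNorm_eq_l2_opNorm [DecidableEq n] (A : Matrix m n ℝ) : specNorm A = ‖A‖ := rfl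

lemma frobNorm_nonneg (A : Matrix m n ℝ) : 0 ≤ frobNorm A := Real.sqrt_nonneg _

lemma frobNorm_neg (A : Matrix m n ℝ) : frobNorm (-A) = frobNorm A := by
  simp [frobNorm]

lemma frobNorm_transpose (A : Matrix m n ℝ) : frobNorm Aᵀ = frobNorm A := by
  rw [frobNorm, frobNorm, Finset.sum_comm]
  rfl

lemma frobNorm_sq_eq_sum_norm_col_sq (A : Matrix m n ℝ) :
    frobNorm A ^ 2 = ∑ j, ‖WithLp.toLp 2 (fun i => A i j)‖ ^ 2 := by
  rw [frobNorm, Real.sq_sqrt (by positivity), Finset.sum_comm]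
  simp [EuclideanSpace.norm_sq_eq]

lemma frobNorm_mul_le_l2_opNorm_mul [DecidableEq n] (A : Matrix m n ℝ) (B : Matrix n l ℝ) :
    frobNorm (A * B) ≤ ‖A‖ * frobNorm B := by
  have hcol : ∀ j,
      ‖WithLp.toLp 2 (fun i => (A * B) i j)‖ ≤ ‖A‖ * ‖WithLp.toLp 2 (fun i => B i j)‖ :=
    fun j => by
      convert Matrix.l2_opNorm_mulVec A (WithLp.toLp 2 (fun i => B i j)) using 3
      ext i
      simp [Matrix.mul_apply, Matrix.mulVec, dotProduct]
  rw [← pow_le_pow_iff_left₀ (frobNorm_nonneg _) (mul_nonneg (norm_nonneg _) (frobNorm_nonneg B))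
    two_ne_zero,
    mul_pow, frobNorm_sq_eq_sum_norm_col_sq, frobNorm_sq_eq_sum_norm_col_sq, Finset.mul_sum]
  gcongr with j
  rw [← mul_pow]
  exact pow_le_pow_left₀ (norm_nonneg _) (hcol j) 2

lemma frobNorm_mul_le_mul_l2_opNorm [DecidableEq m] [DecidableEq n] [DecidableEq l]
    (A : Matrix m n ℝ) (B : Matrix n l ℝ) : frobNorm (A * B) ≤ frobNorm A * ‖B‖ := by
  rw [← frobNorm_transpose, transpose_mul, mul_comm, ← frobNorm_transpose A,
    ← l2_opNorm_conjTranspose B, conjTranspose_eq_transpose_of_trivial]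
  exact frobNorm_mul_le_l2_opNorm_mul _ _

lemma frobNorm_mul_mul_le {k : Type*} [Fintype k] [DecidableEq n] [DecidableEq l]
    (A : Matrix m n ℝ) (G : Matrix n l ℝ) (B : Matrix l k ℝ) :
    frobNorm (A * G * B) ≤ ‖A‖ * ‖G‖ * frobNorm B := by
  rw [Matrix.mul_assoc, mul_assoc]
  exact (frobNorm_mul_le_l2_opNorm_mul _ _).trans
    (mul_le_mul_of_nonneg_left (frobNorm_mul_le_l2_opNorm_mul _ _) (norm_nonneg _))

end Norms

/-- Projection of `N − M` onto the complement of the tangent space at `N`: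
`‖(I − U_N U_Nᵀ)(N − M)(I − V_N V_Nᵀ)‖_F ≤ ‖N − M‖·‖N − M‖_F / σ_r`, where `σ_r > 0`
is (a lower bound on) the smallest nonzero singular value of the rank-`r` matrix `M`. -/
theorem tangent_complement_projection_bound {d₁ d₂ r : ℕ}
    (U UN : Matrix (Fin d₁) (Fin r) ℝ) (V VN : Matrix (Fin d₂) (Fin r) ℝ)
    (σ : Fin r → ℝ) (σr : ℝ)
    (M N : Matrix (Fin d₁) (Fin d₂) ℝ) (SN : Matrix (Fin r) (Fin r) ℝ)
    (hU : Uᵀ * U = 1) (hV : Vᵀ * V = 1)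
    (hσr : 0 < σr) (hσ : ∀ i, σr ≤ σ i)
    (hM : M = U * Matrix.diagonal σ * Vᵀ)
    (hUN : UNᵀ * UN = 1) (hVN : VNᵀ * VN = 1)
    (hN : N = UN * SN * VNᵀ) :
    frobNorm ((1 - UN * UNᵀ) * (N - M) * (1 - VN * VNᵀ))
      ≤ specNorm (N - M) * frobNorm (N - M) / σr := by
  set P := 1 - UN * UNᵀ
  set Q := 1 - VN * VNᵀ
  set G := V * diagonal σ⁻¹ * Uᵀ
  have hPN : P * N = 0 := by
    rw [hN, Matrix.mul_assoc]; exact one_sub_mul_transpose_mul_mul_eq_zero hUN _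
  have hNQ : N * Q = 0 := by
    rw [hN]; exact mul_transpose_mul_one_sub_mul_transpose_eq_zero hVN _
  have hMGM : M * G * M = M := by
    rw [hM]; exact svd_mul_pinv_mul_svd hU hV (diagonal_mul_diagonal_inv_mul_diagonal σ)
  have hPΔ : ‖P * (N - M)‖ ≤ ‖N - M‖ := (l2_opNorm_mul _ _).trans
    (mul_le_of_le_one_left (norm_nonneg _) (l2_opNorm_one_sub_mul_transpose_le_one hUN))
  have hΔQ : frobNorm ((N - M) * Q) ≤ frobNorm (N - M) := (frobNorm_mul_le_mul_l2_opNorm _ _).trans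
    (mul_le_of_le_one_right (frobNorm_nonneg _) (l2_opNorm_one_sub_mul_transpose_le_one hVN))
  rw [specNorm_eq_l2_opNorm, mul_sub_mul_eq_neg_mul_mul_sub_mul hPN hNQ hMGM, frobNorm_neg]
  calc frobNorm (P * (N - M) * G * ((N - M) * Q))
      ≤ ‖P * (N - M)‖ * ‖G‖ * frobNorm ((N - M) * Q) := frobNorm_mul_mul_le _ _ _
    _ ≤ ‖N - M‖ * σr⁻¹ * frobNorm (N - M) := by
        gcongr
        exacts [frobNorm_nonneg _, l2_opNorm_pinv_le hU hV hσr hσ]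
    _ = ‖N - M‖ * frobNorm (N - M) / σr := by ring
end
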